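/- arXiv:2411.00079 — 3 statements merged into one kernel-verified Lean document; each statement's English description precedes it below -/
import Mathlib

section
/- (Oracle inequality.) Let (P_X, η, η̃) be any label-noise problem with η, η̃ measurable, and let f : 𝒳 → {1,…,K} be any measurable classifier. Then for every κ > 0: R(f) − R(f*) ≤ P_X(𝒳 ∖ A_κ(η, η̃)) + (1/κ)·(R̃(f) − R̃(f̃*)). In particular, R(f) − R(f*) ≤ inf_{κ>0} { P_X(𝒳 ∖ A_κ(η, η̃)) + (1/κ)·(R̃(f) − R̃(f̃*)) }. -/
open MeasureTheory ENNReal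

noncomputable section

/-- The probability simplex `Δ^K`. -/
def simplex (K : ℕ) : Set (Fin K → ℝ) :=
  {p | (∀ i, 0 ≤ p i) ∧ ∑ i, p i = 1}

/-- Relative signal strength `M(x; η, η̃)`, where any ratio with zero denominator
(including `0/0`) is taken to be `+∞`. -/
def RSS {K : ℕ} (η ηt : Fin K → ℝ) : ℝ≥0∞ :=
  ⨅ j : Fin K,
    if (⨆ i, η i) - η j = 0 then ⊤
    else ENNReal.ofReal (((⨆ i, ηt i) - ηt j) / ((⨆ i, η i) - η j))

/-- `A_κ`, the region where the relative signal strength exceeds `κ`. -/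
def signalRegion {X : Type*} {K : ℕ} (η ηt : X → Fin K → ℝ) (κ : ℝ) : Set X :=
  {x | ENNReal.ofReal κ < RSS (η x) (ηt x)}

/-- The risk `R(f) = ∫ (1 - [η(x)]_{f(x)}) dP_X(x)` of a classifier `f`. -/
def risk {X : Type*} [MeasurableSpace X] {K : ℕ} (P : Measure X)
    (η : X → Fin K → ℝ) (f : X → Fin K) : ℝ :=
  ∫ x, (1 - η x (f x)) ∂P

/-- The Bayes risk `R(f^*) = ∫ (1 - max_i [η(x)]_i) dP_X(x)`. -/
def bayesRisk {X : Type*} [MeasurableSpace X] {K : ℕ} (P : Measure X)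
    (η : X → Fin K → ℝ) : ℝ :=
  ∫ x, (1 - ⨆ i, η x i) ∂P

section aux

variable {X : Type*} [MeasurableSpace X] {K : ℕ}

lemma simplex_le_one {p : Fin K → ℝ} (hp : p ∈ simplex K) (j : Fin K) : p j ≤ 1 := by
  have := hp.2
  calc p j ≤ ∑ i, p i := Finset.single_le_sum (fun i _ => hp.1 i) (Finset.mem_univ j)
  _ = 1 := hp.2

lemma le_csup [NeZero K] (p : Fin K → ℝ) (j : Fin K) : p j ≤ ⨆ i, p i :=
  le_ciSup (Set.Finite.bddAbove (Set.finite_range p)) j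

lemma csup_le_one [NeZero K] {p : Fin K → ℝ} (hp : p ∈ simplex K) : (⨆ i, p i) ≤ 1 :=
  ciSup_le fun j => simplex_le_one hp j

lemma measurable_csup [NeZero K] {η : X → Fin K → ℝ} (hηm : ∀ i, Measurable fun x => η x i) :
    Measurable fun x => ⨆ i, η x i := by
  have h := Finset.measurable_sup' (f := fun i (x : X) => η x i) Finset.univ_nonempty
    (fun i _ => hηm i)
  convert h using 1
  funext x
  rw [Finset.sup'_apply, ← Finset.sup'_univ_eq_ciSup]

lemma measurable_comp_classifier {η : X → Fin K → ℝ} (hηm : ∀ i, Measurable fun x => η x i)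
    {f : X → Fin K} (hf : Measurable f) : Measurable fun x => η x (f x) := by
  have : (fun x => η x (f x)) = fun x => ∑ i, if f x = i then η x i else 0 := by
    funext x
    simp
  rw [this]
  exact Finset.measurable_sum _ fun i _ =>
    Measurable.ite (hf (measurableSet_singleton i)) (hηm i) measurable_const

end aux

/-- Oracle inequality: for any label-noise problem `(P_X, η, η̃)` and any classifier `f`,
for every `κ > 0`,
`R(f) - R(f*) ≤ P_X(𝒳 \ A_κ) + (1/κ)(R̃(f) - R̃(f̃*))`,
and hence `R(f) - R(f*)` is bounded by the infimum over `κ > 0`. -/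
theorem oracle_inequality {X : Type*} [MeasurableSpace X] (K : ℕ) (hK : 2 ≤ K)
    (P : Measure X) [IsProbabilityMeasure P]
    (η ηt : X → Fin K → ℝ)
    (hη : ∀ x, η x ∈ simplex K) (hηt : ∀ x, ηt x ∈ simplex K)
    (hηm : ∀ i, Measurable fun x => η x i) (hηtm : ∀ i, Measurable fun x => ηt x i)
    (f : X → Fin K) (hf : Measurable f) :
    (∀ κ : ℝ, 0 < κ →
      risk P η f - bayesRisk P η ≤
        (P (signalRegion η ηt κ)ᶜ).toReal + (1 / κ) * (risk P ηt f - bayesRisk P ηt)) ∧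
    risk P η f - bayesRisk P η ≤
      ⨅ κ : {κ : ℝ // 0 < κ},
        ((P (signalRegion η ηt ↑κ)ᶜ).toReal +
          (1 / (κ : ℝ)) * (risk P ηt f - bayesRisk P ηt)) := by
  haveI : NeZero K := ⟨by omega⟩
  -- the excess-loss integrands
  set g : X → ℝ := fun x => (⨆ i, η x i) - η x (f x) with hg
  set gt : X → ℝ := fun x => (⨆ i, ηt x i) - ηt x (f x) with hgt
  have hg0 : ∀ x, 0 ≤ g x := fun x => sub_nonneg.2 (le_csup (η x) (f x))
  have hgt0 : ∀ x, 0 ≤ gt x := fun x => sub_nonneg.2 (le_csup (ηt x) (f x))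
  have hg1 : ∀ x, g x ≤ 1 := fun x =>
    sub_le_iff_le_add.2 (le_add_of_le_of_nonneg (csup_le_one (hη x)) ((hη x).1 (f x)))
  have hgt1 : ∀ x, gt x ≤ 1 := fun x =>
    sub_le_iff_le_add.2 (le_add_of_le_of_nonneg (csup_le_one (hηt x)) ((hηt x).1 (f x)))
  -- measurability
  have hgm : Measurable g := (measurable_csup hηm).sub (measurable_comp_classifier hηm hf)
  have hgtm : Measurable gt := (measurable_csup hηtm).sub (measurable_comp_classifier hηtm hf)
  -- integrability facts (everything is bounded, P is a probability measure)
  have hbdd : ∀ (h : X → ℝ), Measurable h → (∀ x, 0 ≤ h x) → (∀ x, h x ≤ 1) → Integrable h P := by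
    intro h hm h0 h1
    refine (integrable_const (1 : ℝ)).mono' hm.aestronglyMeasurable (ae_of_all _ fun x => ?_)
    rw [Real.norm_eq_abs, abs_of_nonneg (h0 x)]
    exact h1 x
  have hgint : Integrable g P := hbdd g hgm hg0 hg1
  have hgtint : Integrable gt P := hbdd gt hgtm hgt0 hgt1
  have hint1 : Integrable (fun x => 1 - η x (f x)) P := by
    refine hbdd _ (measurable_const.sub (measurable_comp_classifier hηm hf)) (fun x => ?_)
      (fun x => ?_)
    · exact sub_nonneg.2 (simplex_le_one (hη x) (f x))
    · have := (hη x).1 (f x); linarith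
  have hint2 : Integrable (fun x => 1 - ⨆ i, η x i) P := by
    refine hbdd _ (measurable_const.sub (measurable_csup hηm)) (fun x => ?_) (fun x => ?_)
    · exact sub_nonneg.2 (csup_le_one (hη x))
    · have : (0:ℝ) ≤ ⨆ i, η x i := le_trans ((hη x).1 ⟨0, by omega⟩) (le_csup (η x) ⟨0, by omega⟩)
      linarith
  have hint1t : Integrable (fun x => 1 - ηt x (f x)) P := by
    refine hbdd _ (measurable_const.sub (measurable_comp_classifier hηtm hf)) (fun x => ?_)
      (fun x => ?_)
    · exact sub_nonneg.2 (simplex_le_one (hηt x) (f x))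
    · have := (hηt x).1 (f x); linarith
  have hint2t : Integrable (fun x => 1 - ⨆ i, ηt x i) P := by
    refine hbdd _ (measurable_const.sub (measurable_csup hηtm)) (fun x => ?_) (fun x => ?_)
    · exact sub_nonneg.2 (csup_le_one (hηt x))
    · have : (0:ℝ) ≤ ⨆ i, ηt x i :=
        le_trans ((hηt x).1 ⟨0, by omega⟩) (le_csup (ηt x) ⟨0, by omega⟩)
      linarith
  -- excess risk as an integral
  have keyη : risk P η f - bayesRisk P η = ∫ x, g x ∂P := by
    rw [risk, bayesRisk, ← integral_sub hint1 hint2]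
    congr 1; funext x; simp [hg]
  have keyηt : risk P ηt f - bayesRisk P ηt = ∫ x, gt x ∂P := by
    rw [risk, bayesRisk, ← integral_sub hint1t hint2t]
    congr 1; funext x; simp [hgt]
  have hgtint_nonneg : 0 ≤ ∫ x, gt x ∂P := integral_nonneg hgt0
  -- measurability of the signal region
  have hSm : ∀ κ : ℝ, MeasurableSet (signalRegion η ηt κ) := by
    intro κ
    have hRSS : Measurable fun x => RSS (η x) (ηt x) := by
      apply Measurable.iInf
      intro j
      apply Measurable.ite
      · exact ((measurable_csup hηm).sub (hηm j)) (measurableSet_singleton 0)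
      · exact measurable_const
      · exact ENNReal.measurable_ofReal.comp
          (((measurable_csup hηtm).sub (hηtm j)).div ((measurable_csup hηm).sub (hηm j)))
    exact measurableSet_lt measurable_const hRSS
  -- the main pointwise bound and part 1
  have part1 : ∀ κ : ℝ, 0 < κ →
      risk P η f - bayesRisk P η ≤
        (P (signalRegion η ηt κ)ᶜ).toReal + (1 / κ) * (risk P ηt f - bayesRisk P ηt) := by
    intro κ hκ
    have ptwise : ∀ x, g x ≤
        (signalRegion η ηt κ)ᶜ.indicator (fun _ => (1:ℝ)) x + (1 / κ) * gt x := by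
      intro x
      by_cases hx : x ∈ signalRegion η ηt κ
      · rw [Set.indicator_of_notMem (by simpa using hx)]
        have hlt : ENNReal.ofReal κ <
            (if (⨆ i, η x i) - η x (f x) = 0 then ⊤
             else ENNReal.ofReal (((⨆ i, ηt x i) - ηt x (f x)) /
               ((⨆ i, η x i) - η x (f x)))) :=
          lt_of_lt_of_le hx (iInf_le _ (f x))
        by_cases hd : (⨆ i, η x i) - η x (f x) = 0
        · have : g x = 0 := hd
          rw [this, zero_add]
          exact mul_nonneg (by positivity) (hgt0 x)
        · rw [if_neg hd] at hlt
          have hgpos : 0 < g x := lt_of_le_of_ne (hg0 x) (Ne.symm hd)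
          have hratio : κ < gt x / g x := by
            by_contra hcon
            exact absurd (ENNReal.ofReal_le_ofReal (not_lt.1 hcon)) (not_le.2 hlt)
          have : κ * g x < gt x := (lt_div_iff₀ hgpos).1 hratio
          rw [zero_add]
          calc g x ≤ gt x / κ := by rw [le_div_iff₀ hκ]; nlinarith
          _ = (1 / κ) * gt x := by ring
      · rw [Set.indicator_of_mem (by simpa using hx)]
        exact le_add_of_le_of_nonneg (hg1 x)
          (mul_nonneg (le_of_lt (by positivity : (0:ℝ) < 1 / κ)) (hgt0 x))
    have hindint : Integrable ((signalRegion η ηt κ)ᶜ.indicator (fun _ => (1:ℝ))) P :=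
      (integrable_const (1:ℝ)).indicator (hSm κ).compl
    have hbound : ∫ x, g x ∂P ≤
        ∫ x, ((signalRegion η ηt κ)ᶜ.indicator (fun _ => (1:ℝ)) x + (1 / κ) * gt x) ∂P :=
      integral_mono hgint (hindint.add (hgtint.const_mul _)) ptwise
    rw [integral_add hindint (hgtint.const_mul _), integral_indicator_const _ (hSm κ).compl,
      integral_const_mul, smul_eq_mul, mul_one] at hbound
    rw [keyη, keyηt]
    exact hbound
  refine ⟨part1, ?_⟩
  haveI : Nonempty {κ : ℝ // 0 < κ} := ⟨⟨1, one_pos⟩⟩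
  exact le_ciInf fun κ => part1 κ.1 κ.2
end
end

section
/- (Deterministic oracle inequality under the smooth relative signal margin condition.) Let ε ∈ [0,1], α > 0, C_α > 0. Suppose the triple (P_X, η, η̃) satisfies: for all κ > 0, P_X({x : M(x; η, η̃) ≤ κ}) ≤ C_α·κ^α + ε. Then for any measurable classifier f : 𝒳 → {1,…,K}: R(f) − R(f*) ≤ ε + inf_{κ > 0} { C_α·κ^α + (1/κ)·(R̃(f) − R̃(f̃*)) }. -/
open MeasureTheory ENNReal

noncomputable section

/-!
With `gap p j = max p - p j`, the excess risk `R(f) - R(f*)` is the integral of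
`gap η(x) f(x)`. This gap is at most `1` everywhere, and at most `κ⁻¹ · gap η̃(x) f(x)`
wherever `M(x) > κ`, by the very definition of `M` as an infimum of gap ratios. Integrating,
`R(f) - R(f*) ≤ P_X(M ≤ κ) + κ⁻¹ (R̃(f) - R̃(f̃*))`, and the margin condition bounds the
first term by `C_α κ^α + ε`; take the infimum over `κ`.
-/

def gap {K : ℕ} (p : Fin K → ℝ) (j : Fin K) : ℝ :=
  (⨆ i, p i) - p j

section Simplex

variable {K : ℕ} {p : Fin K → ℝ}

lemma mem_Icc_of_mem_simplex (hp : p ∈ simplex K) (i : Fin K) : p i ∈ Set.Icc 0 1 :=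
  ⟨hp.1 i, hp.2 ▸ Finset.single_le_sum (fun j _ => hp.1 j) (Finset.mem_univ i)⟩

lemma gap_nonneg (p : Fin K → ℝ) (j : Fin K) : 0 ≤ gap p j :=
  sub_nonneg.2 (le_ciSup (Set.finite_range p).bddAbove j)

lemma gap_le_one (hp : p ∈ simplex K) (j : Fin K) : gap p j ≤ 1 := by
  have : Nonempty (Fin K) := ⟨j⟩
  have hsup : (⨆ i, p i) ≤ 1 := ciSup_le fun i => (mem_Icc_of_mem_simplex hp i).2
  linarith [(mem_Icc_of_mem_simplex hp j).1, show gap p j = (⨆ i, p i) - p j from rfl]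

lemma mul_gap_le_of_ofReal_lt_RSS {q : Fin K → ℝ} {κ : ℝ}
    (h : ENNReal.ofReal κ < RSS p q) (j : Fin K) : κ * gap p j ≤ gap q j := by
  have hj : ENNReal.ofReal κ <
      if gap p j = 0 then ⊤ else ENNReal.ofReal (gap q j / gap p j) :=
    h.trans_le (iInf_le _ j)
  by_cases hzero : gap p j = 0
  · simpa [hzero] using gap_nonneg q j
  · rw [if_neg hzero, ENNReal.ofReal_lt_ofReal_iff'] at hj
    have hpos : 0 < gap p j := (gap_nonneg p j).lt_of_ne' hzero
    exact ((lt_div_iff₀ hpos).1 hj.1).le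

end Simplex

section Measurability

variable {X : Type*} [MeasurableSpace X] {K : ℕ} {η ηt : X → Fin K → ℝ}

lemma measurable_apply_apply (hηm : ∀ i, Measurable fun x => η x i) {f : X → Fin K}
    (hf : Measurable f) : Measurable fun x => η x (f x) :=
  (measurable_from_prod_countable_left (f := fun p : X × Fin K => η p.1 p.2) hηm).comp
    (measurable_id.prodMk hf)

lemma measurable_gap (hηm : ∀ i, Measurable fun x => η x i) {f : X → Fin K}
    (hf : Measurable f) : Measurable fun x => gap (η x) (f x) :=
  (Measurable.iSup hηm).sub (measurable_apply_apply hηm hf)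

lemma measurable_RSS (hηm : ∀ i, Measurable fun x => η x i)
    (hηtm : ∀ i, Measurable fun x => ηt x i) : Measurable fun x => RSS (η x) (ηt x) :=
  Measurable.iInf fun j =>
    have hgap := measurable_gap hηm (measurable_const (a := j))
    Measurable.ite (hgap (measurableSet_singleton 0)) measurable_const
      (ENNReal.measurable_ofReal.comp
        ((measurable_gap hηtm (measurable_const (a := j))).div hgap))

end Measurability

section Risk

variable {X : Type*} [MeasurableSpace X] {K : ℕ} (P : Measure X) [IsFiniteMeasure P]
  {η ηt : X → Fin K → ℝ} {f : X → Fin K}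

lemma integrable_of_mem_Icc {g : X → ℝ} (hg : Measurable g) (hg01 : ∀ x, g x ∈ Set.Icc 0 1) :
    Integrable g P :=
  .of_bound hg.aestronglyMeasurable 1 <| ae_of_all _ fun x => by
    rw [Real.norm_eq_abs, abs_le]
    exact ⟨by linarith [(hg01 x).1], (hg01 x).2⟩

lemma integrable_gap (hη : ∀ x, η x ∈ simplex K) (hηm : ∀ i, Measurable fun x => η x i)
    (hf : Measurable f) : Integrable (fun x => gap (η x) (f x)) P :=
  integrable_of_mem_Icc P (measurable_gap hηm hf)
    fun x => ⟨gap_nonneg _ _, gap_le_one (hη x) _⟩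

lemma risk_sub_bayesRisk (hη : ∀ x, η x ∈ simplex K) (hηm : ∀ i, Measurable fun x => η x i)
    (hf : Measurable f) : risk P η f - bayesRisk P η = ∫ x, gap (η x) (f x) ∂P := by
  have hrisk : Integrable (fun x => 1 - η x (f x)) P :=
    integrable_of_mem_Icc P
      (measurable_const.sub (measurable_apply_apply hηm hf))
      fun x => by
        have := mem_Icc_of_mem_simplex (hη x) (f x)
        constructor <;> linarith [this.1, this.2]
  have hbayes : (fun x => 1 - ⨆ i, η x i) = fun x => (1 - η x (f x)) - gap (η x) (f x) := by
    funext x; simp only [gap]; ring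
  rw [risk, bayesRisk, hbayes, integral_sub hrisk (integrable_gap P hη hηm hf)]
  ring

lemma integral_gap_le (hη : ∀ x, η x ∈ simplex K) (hηt : ∀ x, ηt x ∈ simplex K)
    (hηm : ∀ i, Measurable fun x => η x i) (hηtm : ∀ i, Measurable fun x => ηt x i)
    (hf : Measurable f) {κ : ℝ} (hκ : 0 < κ) :
    ∫ x, gap (η x) (f x) ∂P ≤
      (P {x | RSS (η x) (ηt x) ≤ ENNReal.ofReal κ}).toReal +
        (1 / κ) * ∫ x, gap (ηt x) (f x) ∂P := by
  set A := {x | RSS (η x) (ηt x) ≤ ENNReal.ofReal κ}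
  have hA : MeasurableSet A := measurable_RSS hηm hηtm measurableSet_Iic
  have hindicator : Integrable (A.indicator fun _ => (1 : ℝ)) P :=
    (integrable_const 1).indicator hA
  have hnoisy := (integrable_gap P hηt hηtm hf).const_mul (1 / κ)
  have hpointwise : ∀ x, gap (η x) (f x) ≤
      A.indicator (fun _ => 1) x + (1 / κ) * gap (ηt x) (f x) := by
    intro x
    by_cases hx : x ∈ A
    · rw [Set.indicator_of_mem hx]
      have := mul_nonneg (one_div_nonneg.2 hκ.le) (gap_nonneg (ηt x) (f x))
      linarith [gap_le_one (hη x) (f x)]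
    · rw [Set.indicator_of_notMem hx, zero_add, one_div, ← div_eq_inv_mul, le_div_iff₀ hκ,
        mul_comm]
      exact mul_gap_le_of_ofReal_lt_RSS (not_le.1 hx) (f x)
  calc ∫ x, gap (η x) (f x) ∂P
      ≤ ∫ x, (A.indicator (fun _ => 1) x + (1 / κ) * gap (ηt x) (f x)) ∂P :=
        integral_mono (integrable_gap P hη hηm hf) (hindicator.add hnoisy) hpointwise
    _ = _ := by
        rw [integral_add hindicator hnoisy, integral_const_mul,
          integral_indicator_const (1 : ℝ) hA, smul_eq_mul, mul_one, measureReal_def]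

end Risk

theorem oracle_inequality_smooth_margin_general
    {X : Type*} [MeasurableSpace X] (K : ℕ)
    (ε α Cα : ℝ)
    (P : Measure X) [IsProbabilityMeasure P]
    (η ηt : X → Fin K → ℝ)
    (hη : ∀ x, η x ∈ simplex K) (hηt : ∀ x, ηt x ∈ simplex K)
    (hηm : ∀ i, Measurable fun x => η x i) (hηtm : ∀ i, Measurable fun x => ηt x i)
    (hmargin : ∀ κ : ℝ, 0 < κ →
      (P {x | RSS (η x) (ηt x) ≤ ENNReal.ofReal κ}).toReal ≤ Cα * κ ^ α + ε)
    (f : X → Fin K) (hf : Measurable f) :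
    risk P η f - bayesRisk P η ≤
      ε + ⨅ κ : {κ : ℝ // 0 < κ},
        (Cα * (κ : ℝ) ^ α + (1 / (κ : ℝ)) * (risk P ηt f - bayesRisk P ηt)) := by
  have : Nonempty {κ : ℝ // 0 < κ} := ⟨⟨1, one_pos⟩⟩
  suffices h : risk P η f - bayesRisk P η - ε ≤ ⨅ κ : {κ : ℝ // 0 < κ},
      (Cα * (κ : ℝ) ^ α + (1 / (κ : ℝ)) * (risk P ηt f - bayesRisk P ηt)) by linarith
  refine le_ciInf fun ⟨κ, hκ⟩ => ?_
  rw [risk_sub_bayesRisk P hη hηm hf, risk_sub_bayesRisk P hηt hηtm hf]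
  linarith [integral_gap_le P hη hηt hηm hηtm hf hκ, hmargin κ hκ]

/-- Deterministic oracle inequality under the `(ε, α, C_α)`-smooth relative signal
margin condition: for any classifier `f`,
`R(f) - R(f*) ≤ ε + inf_{κ>0} {C_α κ^α + (1/κ)(R̃(f) - R̃(f̃*))}`. -/
theorem oracle_inequality_smooth_margin
    {X : Type*} [MeasurableSpace X] (K : ℕ) (hK : 2 ≤ K)
    (ε α Cα : ℝ) (hε : ε ∈ Set.Icc (0 : ℝ) 1) (hα : 0 < α) (hCα : 0 < Cα)
    (P : Measure X) [IsProbabilityMeasure P]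
    (η ηt : X → Fin K → ℝ)
    (hη : ∀ x, η x ∈ simplex K) (hηt : ∀ x, ηt x ∈ simplex K)
    (hηm : ∀ i, Measurable fun x => η x i) (hηtm : ∀ i, Measurable fun x => ηt x i)
    (hmargin : ∀ κ : ℝ, 0 < κ →
      (P {x | RSS (η x) (ηt x) ≤ ENNReal.ofReal κ}).toReal ≤ Cα * κ ^ α + ε)
    (f : X → Fin K) (hf : Measurable f) :
    risk P η f - bayesRisk P η ≤
      ε + ⨅ κ : {κ : ℝ // 0 < κ},
        (Cα * (κ : ℝ) ^ α + (1 / (κ : ℝ)) * (risk P ηt f - bayesRisk P ηt)) :=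
  oracle_inequality_smooth_margin_general K ε α Cα P η ηt hη hηt hηm hηtm hmargin f hf
end
end

section
/- (Universal immunity.) Let K ≥ 2 and let E be a K × K row-stochastic matrix. Then the following are equivalent: (i) for every η ∈ Δ^K, argmax(Eᵀ η) = argmax η; (ii) there exists e ∈ [0, 1/K) such that E_{ii} = 1 − (K−1)e for every i and E_{ij} = e for every i ≠ j. -/
noncomputable section

/-- The set of indices attaining the maximum of `v`. -/
def argmaxSet {K : ℕ} (v : Fin K → ℝ) : Set (Fin K) :=
  {i | v i = ⨆ j, v j}

lemma mem_argmaxSet_iff {K : ℕ} (v : Fin K → ℝ) (i : Fin K) :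
    i ∈ argmaxSet v ↔ ∀ j, v j ≤ v i := by
  haveI : Nonempty (Fin K) := ⟨i⟩
  have hbdd : BddAbove (Set.range v) := Set.Finite.bddAbove (Set.finite_range v)
  rw [argmaxSet, Set.mem_setOf_eq]
  constructor
  · intro h j
    rw [h]; exact le_ciSup hbdd j
  · intro h
    exact le_antisymm (le_ciSup hbdd i) (ciSup_le h)

/-- Universal immunity: for a row-stochastic matrix `E`, `argmax(Eᵀ η) = argmax η`
for every `η ∈ Δ^K` iff `E` is a symmetric-noise matrix: `E_{ii} = 1 - (K-1)e` and
`E_{ij} = e` (`i ≠ j`) for some `e ∈ [0, 1/K)`. -/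
theorem universal_immunity (K : ℕ) (hK : 2 ≤ K)
    (E : Matrix (Fin K) (Fin K) ℝ)
    (hE : ∀ i, (fun j => E i j) ∈ simplex K) :
    (∀ η ∈ simplex K, argmaxSet (E.transpose.mulVec η) = argmaxSet η) ↔
      (∃ e : ℝ, 0 ≤ e ∧ e < 1 / K ∧
        ∀ i j : Fin K, E i j = if i = j then 1 - ((K : ℝ) - 1) * e else e) := by
  have hK2 : (2:ℝ) ≤ (K:ℝ) := by exact_mod_cast hK
  have hKpos : (0:ℝ) < K := by linarith
  have hK1 : (0:ℝ) < (K:ℝ) - 1 := by linarith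
  haveI : Nontrivial (Fin K) := Fin.nontrivial_iff_two_le.mpr hK
  have hmul : ∀ (η : Fin K → ℝ) (m : Fin K),
      E.transpose.mulVec η m = ∑ k, E k m * η k := by
    intro η m
    simp [Matrix.mulVec, dotProduct, Matrix.transpose_apply]
  constructor
  · intro h
    -- Step A: column sums are all 1
    have hcol : ∀ m, ∑ k, E k m = 1 := by
      have hu : (fun _ : Fin K => (1:ℝ)/K) ∈ simplex K := by
        refine ⟨fun i => by positivity, ?_⟩
        simp
        field_simp
      have h1 := h _ hu
      have hall : ∀ m, m ∈ argmaxSet (E.transpose.mulVec (fun _ : Fin K => (1:ℝ)/K)) := by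
        intro m
        rw [h1, mem_argmaxSet_iff]
        intro j; exact le_refl _
      have hw : ∀ m, E.transpose.mulVec (fun _ : Fin K => (1:ℝ)/K) m = (∑ k, E k m)/K := by
        intro m
        rw [hmul]
        simp only [mul_one_div]
        rw [← Finset.sum_div]
      have hconst : ∀ m m', ∑ k, E k m = ∑ k, E k m' := by
        intro m m'
        have h3 := (mem_argmaxSet_iff _ m).1 (hall m) m'
        have h4 := (mem_argmaxSet_iff _ m').1 (hall m') m
        rw [hw, hw] at h3 h4
        have : (∑ k, E k m)/K = (∑ k, E k m')/K := le_antisymm h4 h3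
        field_simp at this
        linarith
      have htot : ∑ m, ∑ k, E k m = (K:ℝ) := by
        rw [Finset.sum_comm]
        rw [Finset.sum_congr rfl (fun k _ => show ∑ m, E k m = 1 from (hE k).2)]
        simp
      intro m
      have : ∑ m', ∑ k, E k m' = (K:ℝ) * ∑ k, E k m := by
        rw [Finset.sum_congr rfl (fun m' _ => hconst m' m)]
        simp [Finset.sum_const, mul_comm]
      rw [htot] at this
      have hKne : (K:ℝ) ≠ 0 := ne_of_gt hKpos
      field_simp at this
      linarith
    -- Step B: off-diagonal entries in each row are equal, and diagonal is strictly larger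
    have hstepB : ∀ j : Fin K,
        (∀ m m', m ≠ j → m' ≠ j → E j m = E j m') ∧ (∀ m, m ≠ j → E j m < E j j) := by
      intro j
      set η : Fin K → ℝ := fun k => if k = j then 0 else 1/((K:ℝ)-1) with hηdef
      have hηs : η ∈ simplex K := by
        constructor
        · intro i
          by_cases hij : i = j <;> simp [hηdef, hij] <;> omega
        · show ∑ k, η k = 1
          simp only [hηdef]
          rw [Finset.sum_ite]
          simp [Finset.filter_eq', Finset.filter_ne', Finset.card_erase_of_mem]
          rw [Nat.cast_sub (by omega)]
          push_cast
          field_simp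
      have hw : ∀ m, E.transpose.mulVec η m = (1 - E j m) / ((K:ℝ)-1) := by
        intro m
        rw [hmul]
        have hterm : ∀ k, E k m * η k
            = E k m / ((K:ℝ)-1) - (if k = j then E k m / ((K:ℝ)-1) else 0) := by
          intro k; by_cases hkj : k = j <;> simp [hηdef, hkj, div_eq_mul_inv]
        rw [Finset.sum_congr rfl (fun k _ => hterm k), Finset.sum_sub_distrib]
        simp [Finset.sum_ite_eq', ← Finset.sum_div, sub_div, hcol m]
      have hargη : ∀ m, m ∈ argmaxSet η ↔ m ≠ j := by
        intro m
        rw [mem_argmaxSet_iff]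
        constructor
        · intro hm hmj
          obtain ⟨i, hi⟩ := exists_ne j
          have := hm i
          rw [hmj] at this
          simp [hηdef, hi] at this
          have : (0:ℝ) < 1/((K:ℝ)-1) := by positivity
          linarith
        · intro hmj k
          by_cases hkj : k = j <;> simp [hηdef, hkj, hmj] <;> omega
      have h1 := h η hηs
      have hmem : ∀ m, m ≠ j → m ∈ argmaxSet (E.transpose.mulVec η) := by
        intro m hm; rw [h1, hargη]; exact hm
      have hjnot : j ∉ argmaxSet (E.transpose.mulVec η) := by
        intro hj; rw [h1, hargη] at hj; exact hj rfl
      constructor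
      · intro m m' hm hm'
        have h3 := (mem_argmaxSet_iff _ m).1 (hmem m hm) m'
        have h4 := (mem_argmaxSet_iff _ m').1 (hmem m' hm') m
        have heq : E.transpose.mulVec η m = E.transpose.mulVec η m' := le_antisymm h4 h3
        rw [hw, hw] at heq
        field_simp at heq
        linarith
      · intro m hm
        have h3 := (mem_argmaxSet_iff _ m).1 (hmem m hm) j
        rcases lt_or_eq_of_le h3 with hlt | heq
        · rw [hw, hw] at hlt
          rw [div_lt_div_iff₀ hK1 hK1] at hlt
          nlinarith
        · exfalso
          apply hjnot
          rw [mem_argmaxSet_iff]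
          intro k
          have := (mem_argmaxSet_iff _ m).1 (hmem m hm) k
          rw [heq]
          exact this
    have hrow : ∀ (j m m' : Fin K), m ≠ j → m' ≠ j → E j m = E j m' :=
      fun j => (hstepB j).1
    have hdiag : ∀ (j m : Fin K), m ≠ j → E j m < E j j := fun j => (hstepB j).2
    -- row sums with constant off-diagonal
    have hdsum : ∀ a b : Fin K, b ≠ a → E a a + ((K:ℝ)-1) * E a b = 1 := by
      intro a b hba
      have h2 : ∑ j, E a j = 1 := (hE a).2
      rw [← Finset.add_sum_erase _ _ (Finset.mem_univ a)] at h2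
      have h3 : ∑ j ∈ Finset.univ.erase a, E a j = ((K:ℝ)-1) * E a b := by
        rw [Finset.sum_congr rfl (fun j hj => hrow a j b (Finset.ne_of_mem_erase hj) hba)]
        rw [Finset.sum_const, Finset.card_erase_of_mem (Finset.mem_univ a)]
        simp only [Finset.card_univ, Fintype.card_fin, nsmul_eq_mul]
        rw [Nat.cast_sub (by omega)]
        push_cast
        ring
      rw [h3] at h2
      exact h2
    -- Step C: symmetry of off-diagonal entries
    have hpair : ∀ a b : Fin K, a ≠ b → E a a + E b a = E a b + E b b := by
      intro a b hab
      set η : Fin K → ℝ := fun k => (if k = a then (1:ℝ) else 0)/2 + (if k = b then 1 else 0)/2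
        with hηdef
      have hηs : η ∈ simplex K := by
        constructor
        · intro i
          simp only [hηdef]
          have h1 : (0:ℝ) ≤ if i = a then 1 else 0 := by split <;> norm_num
          have h2 : (0:ℝ) ≤ if i = b then 1 else 0 := by split <;> norm_num
          linarith
        · show ∑ k, η k = 1
          simp only [hηdef]
          rw [Finset.sum_add_distrib, ← Finset.sum_div, ← Finset.sum_div]
          simp [Finset.sum_ite_eq']
          norm_num
      have hw : ∀ m, E.transpose.mulVec η m = E a m / 2 + E b m / 2 := by
        intro m
        rw [hmul]
        simp only [hηdef]
        simp [mul_add, Finset.sum_add_distrib, mul_div_assoc', ← Finset.sum_div,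
          Finset.sum_ite_eq']
      have hηa : η a = 1/2 := by simp [hηdef, hab]
      have hηb : η b = 1/2 := by simp [hηdef, Ne.symm hab]
      have hmema : a ∈ argmaxSet η := by
        rw [mem_argmaxSet_iff]
        intro k
        rw [hηa]
        by_cases hka : k = a
        · rw [hka, hηa]
        · by_cases hkb : k = b
          · rw [hkb, hηb]
          · norm_num [hηdef, hka, hkb]
      have hmemb : b ∈ argmaxSet η := by
        rw [mem_argmaxSet_iff]
        intro k
        rw [hηb]
        by_cases hka : k = a
        · rw [hka, hηa]
        · by_cases hkb : k = b
          · rw [hkb, hηb]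
          · norm_num [hηdef, hka, hkb]
      have h1 := h η hηs
      rw [← h1] at hmema hmemb
      have h3 := (mem_argmaxSet_iff _ a).1 hmema b
      have h4 := (mem_argmaxSet_iff _ b).1 hmemb a
      have heq : E.transpose.mulVec η a = E.transpose.mulVec η b := le_antisymm h4 h3
      rw [hw, hw] at heq
      linarith
    have hsym : ∀ a b : Fin K, a ≠ b → E a b = E b a := by
      intro a b hab
      have h1 := hdsum a b (Ne.symm hab)
      have h2 := hdsum b a hab
      have h3 := hpair a b hab
      have : (K:ℝ) * E a b = (K:ℝ) * E b a := by nlinarith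
      exact mul_left_cancel₀ (ne_of_gt hKpos) this
    -- assemble
    set i0 : Fin K := ⟨0, by omega⟩ with hi0
    set i1 : Fin K := ⟨1, by omega⟩ with hi1
    have h01 : i0 ≠ i1 := by simp [hi0, hi1, Fin.ext_iff]
    set e : ℝ := E i0 i1 with he
    have hoff : ∀ i j : Fin K, i ≠ j → E i j = e := by
      intro i j hij
      by_cases hi : i = i0
      · subst hi
        exact hrow i0 j i1 (Ne.symm hij) (Ne.symm h01)
      · calc E i j = E i i0 := hrow i j i0 (Ne.symm hij) (Ne.symm hi)
          _ = E i0 i := hsym i i0 hi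
          _ = E i0 i1 := hrow i0 i i1 hi (Ne.symm h01)
    refine ⟨e, (hE i0).1 i1, ?_, ?_⟩
    · have h1 := hdiag i0 i1 (Ne.symm h01)
      have h2 := hdsum i0 i1 (Ne.symm h01)
      rw [lt_div_iff₀ hKpos]
      rw [← he] at h1 h2
      nlinarith
    · intro i j
      by_cases hij : i = j
      · subst hij
        rw [if_pos rfl]
        obtain ⟨b, hb⟩ := exists_ne i
        have h2 := hdsum i b hb
        rw [hoff i b (Ne.symm hb)] at h2
        linarith
      · rw [if_neg hij]
        exact hoff i j hij
  · rintro ⟨e, he0, heK, hEe⟩ η hη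
    have hc : 0 < 1 - (K:ℝ)*e := by
      rw [lt_div_iff₀ hKpos] at heK
      linarith
    have hw : ∀ m, E.transpose.mulVec η m = e + (1 - (K:ℝ)*e) * η m := by
      intro m
      rw [hmul]
      rw [Finset.sum_congr rfl (fun k _ => by rw [hEe k m])]
      have hterm : ∀ k, (if k = m then 1 - ((K:ℝ)-1)*e else e) * η k
          = e * η k + (if k = m then (1 - (K:ℝ)*e) * η k else 0) := by
        intro k; by_cases hkm : k = m <;> simp [hkm] <;> ring
      rw [Finset.sum_congr rfl (fun k _ => hterm k), Finset.sum_add_distrib,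
        ← Finset.mul_sum, hη.2, Finset.sum_ite_eq', mul_one]
      simp
    ext i
    rw [mem_argmaxSet_iff, mem_argmaxSet_iff]
    constructor
    · intro hm j
      have := hm j
      rw [hw, hw] at this
      nlinarith
    · intro hm j
      rw [hw, hw]
      have := hm j
      nlinarith
end
end
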